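/- For every positive integer m, the semigroup B_ω^{F^n} is isomorphic to its subsemigroup (m,m,0)·B_ω^{F^n}·(m,m,0) = {(i,j,p) : i,j ≥ m}, via the corestriction of λ^m. -/

import Mathlib

/-- The bicyclic-extension semigroup operation on `ℕ × ℕ × Fin n`. -/
def Bmul (n : ℕ) (x y : ℕ × ℕ × Fin n) : ℕ × ℕ × Fin n :=
  if x.2.1 ≤ y.1 then
    (x.1 - x.2.1 + y.1, y.2.1,
      ⟨max (x.2.2.1 - (y.1 - x.2.1)) y.2.2.1, by
        have h1 := x.2.2.2; have h2 := y.2.2.2; omega⟩)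
  else
    (x.1, x.2.1 - y.1 + y.2.1,
      ⟨max x.2.2.1 (y.2.2.1 - (x.2.1 - y.1)), by
        have h1 := x.2.2.2; have h2 := y.2.2.2; omega⟩)

/-- The shift endomorphism λ. -/
def lamB (n : ℕ) (x : ℕ × ℕ × Fin n) : ℕ × ℕ × Fin n :=
  (x.1 + 1, x.2.1 + 1, x.2.2)

/-- The endomorphism ϖ_n. -/
def varpiB (n : ℕ) (x : ℕ × ℕ × Fin n) : ℕ × ℕ × Fin n :=
  (x.1 + x.2.2.1, x.2.1 + x.2.2.1,
    ⟨n - 1 - x.2.2.1, by have := x.2.2.2; omega⟩)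

/-- The endomorphism α_[k] of B_ω^{F³}. -/
def alphaB (k : ℕ) (x : ℕ × ℕ × Fin 3) : ℕ × ℕ × Fin 3 :=
  if x.2.2.1 = 2 then (k * (x.1 + 1) - 1, k * (x.2.1 + 1) - 1, x.2.2)
  else (k * x.1, k * x.2.1, x.2.2)

/-! The shift `λ` is injective and commutes with the multiplication, which only sees differences
of coordinates, so `λ^m` is an injective endomorphism onto `{i, j ≥ m}`. That set is the sandwich
`e·B·e` for the idempotent `e = (m,m,0)`: `e` is a two-sided identity on it, and a product `x·y`
never has smaller first coordinate than `x` nor smaller second coordinate than `y`. -/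

theorem lamB_injective (n : ℕ) : Function.Injective (lamB n) := by
  rintro ⟨i, j, p⟩ ⟨i', j', p'⟩ h
  simp_all [lamB]

theorem semiconj₂_lamB_Bmul (n : ℕ) : Function.Semiconj₂ (lamB n) (Bmul n) (Bmul n) := by
  intro x y
  simp only [lamB, Bmul, add_le_add_iff_right]
  split_ifs <;> ext <;> simp <;> omega

theorem lamB_iterate_apply (n m : ℕ) (x : ℕ × ℕ × Fin n) :
    (lamB n)^[m] x = (x.1 + m, x.2.1 + m, x.2.2) := by
  induction m with
  | zero => rfl
  | succ k ih => rw [Function.iterate_succ_apply', ih, lamB]; simp [Nat.add_assoc]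

theorem range_lamB_iterate (n m : ℕ) :
    Set.range ((lamB n)^[m]) = {z : ℕ × ℕ × Fin n | m ≤ z.1 ∧ m ≤ z.2.1} := by
  ext z
  simp only [Set.mem_range, Set.mem_ofPred_eq, lamB_iterate_apply]
  constructor
  · rintro ⟨x, rfl⟩
    simp
  · rintro ⟨h1, h2⟩
    exact ⟨(z.1 - m, z.2.1 - m, z.2.2), by ext <;> simp <;> omega⟩

theorem fst_le_fst_Bmul (n : ℕ) (x y : ℕ × ℕ × Fin n) : x.1 ≤ (Bmul n x y).1 := by
  unfold Bmul
  split_ifs <;> simp only <;> omega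

theorem snd_le_snd_Bmul (n : ℕ) (x y : ℕ × ℕ × Fin n) : y.2.1 ≤ (Bmul n x y).2.1 := by
  unfold Bmul
  split_ifs <;> simp only <;> omega

theorem Bmul_idempotent_left {n m : ℕ} (hn : 0 < n) {z : ℕ × ℕ × Fin n} (hz : m ≤ z.1) :
    Bmul n (m, m, ⟨0, hn⟩) z = z := by
  unfold Bmul
  rw [if_pos hz]
  ext <;> simp

/-- `Bmul` computes `x.1 - x.2.1 + y.1` with truncated subtraction, hence the hypothesis `hz₁`. -/
theorem Bmul_idempotent_right {n m : ℕ} (hn : 0 < n) {z : ℕ × ℕ × Fin n} (hz₁ : m ≤ z.1)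
    (hz₂ : m ≤ z.2.1) :
    Bmul n z (m, m, ⟨0, hn⟩) = z := by
  unfold Bmul
  split_ifs <;> ext <;> simp <;> omega

theorem mem_sandwich_iff {n m : ℕ} (hn : 0 < n) (z : ℕ × ℕ × Fin n) :
    (∃ x, z = Bmul n (Bmul n (m, m, ⟨0, hn⟩) x) (m, m, ⟨0, hn⟩)) ↔ m ≤ z.1 ∧ m ≤ z.2.1 := by
  constructor
  · rintro ⟨x, rfl⟩
    exact ⟨(fst_le_fst_Bmul n (m, m, ⟨0, hn⟩) x).trans (fst_le_fst_Bmul n _ _),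
      snd_le_snd_Bmul n _ (m, m, ⟨0, hn⟩)⟩
  · rintro ⟨h1, h2⟩
    exact ⟨z, by rw [Bmul_idempotent_left hn h1, Bmul_idempotent_right hn h1 h2]⟩

theorem B_iso_sandwich_general (n m : ℕ) (hn : 0 < n) :
    (∀ z : ℕ × ℕ × Fin n,
      (∃ x, z = Bmul n (Bmul n (m, m, ⟨0, hn⟩) x) (m, m, ⟨0, hn⟩)) ↔
        m ≤ z.1 ∧ m ≤ z.2.1) ∧
    Function.Injective ((lamB n)^[m]) ∧
    Set.range ((lamB n)^[m]) = {z : ℕ × ℕ × Fin n | m ≤ z.1 ∧ m ≤ z.2.1} ∧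
    ∀ x y : ℕ × ℕ × Fin n,
      (lamB n)^[m] (Bmul n x y) = Bmul n ((lamB n)^[m] x) ((lamB n)^[m] y) :=
  ⟨mem_sandwich_iff hn, (lamB_injective n).iterate m, range_lamB_iterate n m,
    (semiconj₂_lamB_Bmul n).iterate m⟩

/-- `B_ω^{F^n}` is isomorphic to its subsemigroup `(m,m,0)·B_ω^{F^n}·(m,m,0)
= {(i,j,p) : i,j ≥ m}` via the corestriction of `λ^m`. -/
theorem B_iso_sandwich (n m : ℕ) (hn : 0 < n) (hm : 0 < m) :
    (∀ z : ℕ × ℕ × Fin n,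
      (∃ x, z = Bmul n (Bmul n (m, m, ⟨0, hn⟩) x) (m, m, ⟨0, hn⟩)) ↔
        m ≤ z.1 ∧ m ≤ z.2.1) ∧
    Function.Injective ((lamB n)^[m]) ∧
    Set.range ((lamB n)^[m]) = {z : ℕ × ℕ × Fin n | m ≤ z.1 ∧ m ≤ z.2.1} ∧
    ∀ x y : ℕ × ℕ × Fin n,
      (lamB n)^[m] (Bmul n x y) = Bmul n ((lamB n)^[m] x) ((lamB n)^[m] y) :=
  B_iso_sandwich_general n m hn
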